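/- (Identify step bound) Let v = x − x^ℓ where both x and x^ℓ are k-sparse in D, let ṽ = A*Av + A*e, and let Ω = S_D(ṽ, 2k) be a near-optimal support of size 2k for ṽ with parameter ε₁. If A satisfies the D-RIP of order 4k with constant δ_{4k}, then ‖P_{Ω⊥} v‖ ≤ ((2+ε₁)δ_{4k} + ε₁)‖v‖ + (2+ε₁)√(1+δ_{4k})‖e‖. -/

import Mathlib

noncomputable section

abbrev Vec (n : ℕ) := EuclideanSpace ℂ (Fin n)

/-- Span of the columns of `D` indexed by `B`. -/
def colSpan {n d : ℕ} (D : Vec d →L[ℂ] Vec n) (B : Finset (Fin d)) : Submodule ℂ (Vec n) :=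
  Submodule.span ℂ ((fun j => D (EuclideanSpace.single j 1)) '' (B : Set (Fin d)))

/-- Orthogonal projection onto the span of the columns of `D` indexed by `B`. -/
def P {n d : ℕ} (D : Vec d →L[ℂ] Vec n) (B : Finset (Fin d)) (z : Vec n) : Vec n :=
  (Submodule.orthogonalProjection (colSpan D B) z : Vec n)

open Classical in
/-- `α` has at most `k` nonzero entries. -/
def sparse {d : ℕ} (k : ℕ) (α : Vec d) : Prop :=
  (Finset.univ.filter fun i => α i ≠ 0).card ≤ k

/-- `A` satisfies the `D`-RIP of order `k` with constant `δ`. -/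
def DRIP {m n d : ℕ} (A : Vec n →L[ℂ] Vec m) (D : Vec d →L[ℂ] Vec n) (k : ℕ) (δ : ℝ) : Prop :=
  ∀ α : Vec d, sparse k α →
    Real.sqrt (1 - δ) * ‖D α‖ ≤ ‖A (D α)‖ ∧ ‖A (D α)‖ ≤ Real.sqrt (1 + δ) * ‖D α‖

/-! Write `v = D γ` with `γ` supported on a set `Λ` of `2k` columns and put `R = Λ ∪ Ωopt`, so
`|R| ≤ 4k`. On the span of the columns in `R` the D-RIP makes `A*A - I` a `δ`-small form, so the
projection onto that span of the perturbation `ṽ - v = (A*A - I) v + A* e` has norm at most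
`c = δ‖v‖ + √(1 + δ)‖e‖`. Since `span D_Λ` and `span D_Ωopt` both lie in `span D_R`, Pythagoras
turns the optimality of `Ωopt` against `Λ` into `‖v - P_Ωopt ṽ‖ ≤ 2c`; near-optimality of `Ω` costs
a further `ε₁‖P_Ωopt ṽ‖ ≤ ε₁(‖v‖ + c)`, and `P_Ω v` is the best approximation of `v` from
`span D_Ω`. -/

open scoped InnerProductSpace
open RCLike

section NearIsometry

variable {𝕜 E F : Type*} [RCLike 𝕜] [NormedAddCommGroup E] [InnerProductSpace 𝕜 E]
  [NormedAddCommGroup F] [InnerProductSpace 𝕜 F] {K : Submodule 𝕜 E} {δ : ℝ}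

theorem re_inner_map_sub_inner_le_add (A : E →ₗ[𝕜] F)
    (hA : ∀ u ∈ K, |‖A u‖ ^ 2 - ‖u‖ ^ 2| ≤ δ * ‖u‖ ^ 2) {u w : E} (hu : u ∈ K) (hw : w ∈ K) :
    re (⟪A u, A w⟫_𝕜 - ⟪u, w⟫_𝕜) ≤ δ / 2 * (‖u‖ ^ 2 + ‖w‖ ^ 2) := by
  have hadd := abs_le.1 (hA _ (K.add_mem hu hw))
  have hsub := abs_le.1 (hA _ (K.sub_mem hu hw))
  have hpar := parallelogram_law_with_norm 𝕜 u w
  rw [map_sub, re_inner_eq_norm_add_mul_self_sub_norm_sub_mul_self_div_four,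
    re_inner_eq_norm_add_mul_self_sub_norm_sub_mul_self_div_four, ← map_add, ← map_sub]
  have hδpar := congrArg (δ * ·) hpar
  simp only [sq] at *
  linarith

theorem re_inner_map_sub_inner_le (A : E →ₗ[𝕜] F)
    (hA : ∀ u ∈ K, |‖A u‖ ^ 2 - ‖u‖ ^ 2| ≤ δ * ‖u‖ ^ 2) {u w : E} (hu : u ∈ K) (hw : w ∈ K) :
    re (⟪A u, A w⟫_𝕜 - ⟪u, w⟫_𝕜) ≤ δ * ‖u‖ * ‖w‖ := by
  rcases eq_or_ne u 0 with rfl | hu0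
  · simp
  rcases eq_or_ne w 0 with rfl | hw0
  · simp
  -- polarize the rescaled pair `‖w‖ • u`, `‖u‖ • w`, whose members have equal norms
  have h := re_inner_map_sub_inner_le_add A hA (K.smul_mem (‖w‖ : 𝕜) hu)
    (K.smul_mem (‖u‖ : 𝕜) hw)
  simp only [map_smul, inner_smul_real_left, inner_smul_real_right, norm_smul, norm_algebraMap',
    norm_norm, real_smul_eq_coe_mul] at h
  simp only [← mul_assoc, ← ofReal_mul, ← mul_sub, re_ofReal_mul] at h
  have hpos : 0 < ‖u‖ * ‖w‖ := by positivity
  nlinarith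

theorem norm_map_le_sqrt (A : E →ₗ[𝕜] F)
    (hA : ∀ u ∈ K, |‖A u‖ ^ 2 - ‖u‖ ^ 2| ≤ δ * ‖u‖ ^ 2) {u : E} (hu : u ∈ K) :
    ‖A u‖ ≤ √(1 + δ) * ‖u‖ := by
  rw [← Real.sqrt_sq (norm_nonneg u), ← Real.sqrt_mul' _ (sq_nonneg _)]
  exact Real.le_sqrt_of_sq_le (by linarith [(abs_le.1 (hA u hu)).2])

theorem norm_starProjection_adjoint_add_sub_le [CompleteSpace E] [CompleteSpace F]
    [K.HasOrthogonalProjection] (A : E →L[𝕜] F)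
    (hA : ∀ u ∈ K, |‖A u‖ ^ 2 - ‖u‖ ^ 2| ≤ δ * ‖u‖ ^ 2) {v : E} (hv : v ∈ K) (e : F) :
    ‖K.starProjection (A.adjoint (A v) + A.adjoint e - v)‖ ≤ δ * ‖v‖ + √(1 + δ) * ‖e‖ := by
  set z := A.adjoint (A v) + A.adjoint e - v
  set p := K.starProjection z
  have hp : p ∈ K := K.starProjection_apply_mem z
  have hδv : 0 ≤ δ * ‖v‖ := by
    rcases eq_or_ne v 0 with rfl | hv0
    · simp
    have hδ : 0 ≤ δ := nonneg_of_mul_nonneg_left ((abs_nonneg _).trans (hA v hv)) (by positivity)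
    positivity
  have hsq : ‖p‖ ^ 2 ≤ (δ * ‖v‖ + √(1 + δ) * ‖e‖) * ‖p‖ := calc
    ‖p‖ ^ 2 = re ⟪p, p⟫_𝕜 := (inner_self_eq_norm_sq p).symm
    _ = re ⟪z, p⟫_𝕜 := by
      rw [K.inner_starProjection_left_eq_right, K.starProjection_eq_self_iff.2 hp]
    _ = re (⟪A v, A p⟫_𝕜 - ⟪v, p⟫_𝕜) + re ⟪e, A p⟫_𝕜 := by
      rw [inner_sub_left, inner_add_left, ContinuousLinearMap.adjoint_inner_left,
        ContinuousLinearMap.adjoint_inner_left, map_sub, map_add, map_sub]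
      ring
    _ ≤ δ * ‖v‖ * ‖p‖ + ‖e‖ * (√(1 + δ) * ‖p‖) := by
      gcongr
      · exact re_inner_map_sub_inner_le A.toLinearMap hA hv hp
      · exact (re_le_norm _).trans ((norm_inner_le_norm _ _).trans
          (by gcongr; exact norm_map_le_sqrt A.toLinearMap hA hp))
    _ = (δ * ‖v‖ + √(1 + δ) * ‖e‖) * ‖p‖ := by ring
  have hc : 0 ≤ δ * ‖v‖ + √(1 + δ) * ‖e‖ := by positivity
  nlinarith [norm_nonneg p]

end NearIsometry

section Projection

variable {𝕜 E : Type*} [RCLike 𝕜] [NormedAddCommGroup E] [InnerProductSpace 𝕜 E]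
  {U V : Submodule 𝕜 E} [U.HasOrthogonalProjection] [V.HasOrthogonalProjection]

theorem norm_sub_starProjection_le_norm_sub (y : E) {x : E} (hx : x ∈ U) :
    ‖y - U.starProjection y‖ ≤ ‖y - x‖ := by
  rw [Submodule.starProjection_minimal]
  exact ciInf_le ⟨0, Set.forall_mem_range.2 fun _ => norm_nonneg _⟩ (⟨x, hx⟩ : U)

theorem norm_sq_eq_norm_sq_starProjection_add (x : E) :
    ‖x‖ ^ 2 = ‖U.starProjection x‖ ^ 2 + ‖x - U.starProjection x‖ ^ 2 := by
  simpa using U.norm_sq_eq_add_norm_sq_starProjection x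

theorem norm_starProjection_sub_sq_of_le (h : U ≤ V) (x : E) :
    ‖V.starProjection x - U.starProjection x‖ ^ 2 =
      ‖V.starProjection x‖ ^ 2 - ‖U.starProjection x‖ ^ 2 := by
  have hUV : U.starProjection (V.starProjection x) = U.starProjection x :=
    DFunLike.congr_fun (Submodule.starProjection_comp_starProjection_of_le h) x
  have := norm_sq_eq_norm_sq_starProjection_add (U := U) (V.starProjection x)
  rw [hUV] at this
  linarith

theorem norm_starProjection_le_of_le (h : U ≤ V) (x : E) :
    ‖U.starProjection x‖ ≤ ‖V.starProjection x‖ := by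
  have := norm_starProjection_sub_sq_of_le h x
  exact (sq_le_sq₀ (norm_nonneg _) (norm_nonneg _)).1
    (by linarith [sq_nonneg ‖V.starProjection x - U.starProjection x‖])

theorem norm_starProjection_le_of_norm_sub_le {x : E}
    (h : ‖x - V.starProjection x‖ ≤ ‖x - U.starProjection x‖) :
    ‖U.starProjection x‖ ≤ ‖V.starProjection x‖ := by
  have hU := norm_sq_eq_norm_sq_starProjection_add (U := U) x
  have hV := norm_sq_eq_norm_sq_starProjection_add (U := V) x
  have h2 := pow_le_pow_left₀ (norm_nonneg _) h 2
  exact (sq_le_sq₀ (norm_nonneg _) (norm_nonneg _)).1 (by linarith)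

end Projection

section Selection

variable {𝕜 E : Type*} [RCLike 𝕜] [NormedAddCommGroup E] [InnerProductSpace 𝕜 E]
  {Λ O R Ω : Submodule 𝕜 E} [Λ.HasOrthogonalProjection] [O.HasOrthogonalProjection]
  [R.HasOrthogonalProjection] [Ω.HasOrthogonalProjection] {v w : E}

theorem norm_sub_starProjection_le_of_optimal (hΛR : Λ ≤ R) (hOR : O ≤ R) (hv : v ∈ Λ)
    (hopt : ‖w - O.starProjection w‖ ≤ ‖w - Λ.starProjection w‖) :
    ‖v - O.starProjection w‖ ≤ 2 * ‖R.starProjection (w - v)‖ := by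
  set c := ‖R.starProjection (w - v)‖
  have hRv : R.starProjection v = v := R.starProjection_eq_self_iff.2 (hΛR hv)
  have hΛv : Λ.starProjection v = v := Λ.starProjection_eq_self_iff.2 hv
  have hΛO := norm_starProjection_le_of_norm_sub_le hopt
  have hRO : ‖R.starProjection w - O.starProjection w‖ ^ 2 ≤ c ^ 2 := calc
    _ = ‖R.starProjection w‖ ^ 2 - ‖O.starProjection w‖ ^ 2 :=
      norm_starProjection_sub_sq_of_le hOR w
    _ ≤ ‖R.starProjection w‖ ^ 2 - ‖Λ.starProjection w‖ ^ 2 := by gcongr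
    _ = ‖R.starProjection (w - v) - Λ.starProjection (w - v)‖ ^ 2 := by
      rw [← norm_starProjection_sub_sq_of_le hΛR w, map_sub, map_sub, hRv, hΛv,
        sub_sub_sub_cancel_right]
    _ = c ^ 2 - ‖Λ.starProjection (w - v)‖ ^ 2 := norm_starProjection_sub_sq_of_le hΛR _
    _ ≤ c ^ 2 := by linarith [sq_nonneg ‖Λ.starProjection (w - v)‖]
  calc ‖v - O.starProjection w‖
      = ‖(R.starProjection w - O.starProjection w) - R.starProjection (w - v)‖ := by
        rw [map_sub, hRv, sub_sub_sub_cancel_left]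
    _ ≤ ‖R.starProjection w - O.starProjection w‖ + c := norm_sub_le _ _
    _ ≤ c + c := by gcongr; exact le_of_pow_le_pow_left₀ two_ne_zero (norm_nonneg _) hRO
    _ = 2 * c := by ring

theorem norm_sub_starProjection_le_of_near_optimal (hΛR : Λ ≤ R) (hOR : O ≤ R) (hv : v ∈ Λ)
    (hopt : ‖w - O.starProjection w‖ ≤ ‖w - Λ.starProjection w‖) {ε : ℝ} (hε : 0 ≤ ε)
    (hnear : ‖O.starProjection w - Ω.starProjection w‖ ≤ ε * ‖O.starProjection w‖) :
    ‖v - Ω.starProjection v‖ ≤ (2 + ε) * ‖R.starProjection (w - v)‖ + ε * ‖v‖ := by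
  set c := ‖R.starProjection (w - v)‖
  have hOw : ‖O.starProjection w‖ ≤ ‖v‖ + c := calc
    ‖O.starProjection w‖ = ‖O.starProjection v + O.starProjection (w - v)‖ := by
      rw [← map_add, add_sub_cancel]
    _ ≤ ‖v‖ + c := norm_add_le_of_le (O.norm_starProjection_apply_le v)
      (norm_starProjection_le_of_le hOR _)
  calc ‖v - Ω.starProjection v‖
      ≤ ‖v - Ω.starProjection w‖ :=
        norm_sub_starProjection_le_norm_sub v (Ω.starProjection_apply_mem w)
    _ ≤ ‖v - O.starProjection w‖ + ‖O.starProjection w - Ω.starProjection w‖ :=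
        norm_sub_le_norm_sub_add_norm_sub _ _ _
    _ ≤ 2 * c + ε * (‖v‖ + c) := by
      gcongr
      · exact norm_sub_starProjection_le_of_optimal hΛR hOR hv hopt
      · exact hnear.trans (by gcongr)
    _ = (2 + ε) * c + ε * ‖v‖ := by ring

end Selection

section ColumnSpan

variable {m n d : ℕ} {D : Vec d →L[ℂ] Vec n} {B B' : Finset (Fin d)}

theorem colSpan_mono (h : B ⊆ B') : colSpan D B ≤ colSpan D B' :=
  Submodule.span_mono (Set.image_mono (Finset.coe_subset.2 h))

theorem apply_mem_colSpan {γ : Vec d} (hγ : ∀ i ∉ B, γ i = 0) : D γ ∈ colSpan D B := by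
  rw [← (EuclideanSpace.basisFun (Fin d) ℂ).sum_repr γ, map_sum]
  refine Submodule.sum_mem _ fun i _ => ?_
  by_cases hi : i ∈ B
  · rw [map_smul, EuclideanSpace.basisFun_apply]
    exact Submodule.smul_mem _ _ (Submodule.subset_span ⟨i, hi, rfl⟩)
  · simp [hγ i hi]

theorem exists_eq_apply_of_mem_colSpan {u : Vec n} (hu : u ∈ colSpan D B) :
    ∃ γ : Vec d, (∀ i ∉ B, γ i = 0) ∧ D γ = u := by
  induction hu using Submodule.span_induction with
  | mem _ h =>
    obtain ⟨j, hj, rfl⟩ := h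
    refine ⟨EuclideanSpace.single j 1, fun i hi => ?_, rfl⟩
    simp [(ne_of_mem_of_not_mem hj hi).symm]
  | zero => exact ⟨0, fun _ _ => rfl, map_zero D⟩
  | add _ _ _ _ h₁ h₂ =>
    obtain ⟨γ₁, hγ₁, rfl⟩ := h₁
    obtain ⟨γ₂, hγ₂, rfl⟩ := h₂
    exact ⟨γ₁ + γ₂, fun i hi => by simp [hγ₁ i hi, hγ₂ i hi], map_add D γ₁ γ₂⟩
  | smul c _ _ h =>
    obtain ⟨γ, hγ, rfl⟩ := h
    exact ⟨c • γ, fun i hi => by simp [hγ i hi], map_smul D c γ⟩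

theorem sparse_of_eq_zero_of_not_mem {k : ℕ} {γ : Vec d} (hγ : ∀ i ∉ B, γ i = 0)
    (hB : B.card ≤ k) : sparse k γ := by
  classical
  refine (Finset.card_le_card fun i hi => ?_).trans hB
  by_contra hiB
  exact (Finset.mem_filter.1 hi).2 (hγ i hiB)

theorem sparse_sub {k k' : ℕ} {α β : Vec d} (hα : sparse k α) (hβ : sparse k' β) :
    sparse (k + k') (α - β) := by
  classical
  refine (Finset.card_le_card fun i hi => ?_).trans
    ((Finset.card_union_le _ _).trans (add_le_add hα hβ))
  simp only [Finset.mem_union, Finset.mem_filter, Finset.mem_univ, true_and] at hi ⊢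
  by_contra! h
  exact hi (by simp [h.1, h.2])

theorem exists_card_eq_of_sparse {k : ℕ} {γ : Vec d} (hγ : sparse k γ) (hk : k ≤ d) :
    ∃ Λ : Finset (Fin d), Λ.card = k ∧ ∀ i ∉ Λ, γ i = 0 := by
  classical
  obtain ⟨Λ, hsub, hcard⟩ := Finset.exists_superset_card_eq hγ (by simpa using hk)
  exact ⟨Λ, hcard, fun i hi => by_contra fun h => hi (hsub (by simpa using h))⟩

end ColumnSpan

namespace DRIP

variable {m n d K : ℕ} {A : Vec n →L[ℂ] Vec m} {D : Vec d →L[ℂ] Vec n} {δ : ℝ}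

theorem nonneg (hRIP : DRIP A D K δ) {γ : Vec d} (hγ : sparse K γ) (h0 : D γ ≠ 0) : 0 ≤ δ := by
  obtain ⟨hlo, hhi⟩ := hRIP γ hγ
  rcases le_or_gt 1 δ with h | h
  · linarith
  have := le_of_mul_le_mul_right (hlo.trans hhi) (norm_pos_iff.2 h0)
  linarith [(Real.sqrt_le_sqrt_iff' (by linarith)).1 this]

theorem abs_sq_sub_le (hRIP : DRIP A D K δ) {γ : Vec d} (hγ : sparse K γ) :
    |‖A (D γ)‖ ^ 2 - ‖D γ‖ ^ 2| ≤ δ * ‖D γ‖ ^ 2 := by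
  rcases eq_or_ne (D γ) 0 with h0 | h0
  · simp [h0]
  have hδ := hRIP.nonneg hγ h0
  obtain ⟨hlo, hhi⟩ := hRIP γ hγ
  have hlo2 := pow_le_pow_left₀ (by positivity) hlo 2
  have hhi2 := pow_le_pow_left₀ (norm_nonneg _) hhi 2
  rw [mul_pow, Real.sq_sqrt'] at hlo2
  rw [mul_pow, Real.sq_sqrt (by linarith)] at hhi2
  rw [abs_le]
  constructor <;> nlinarith [le_max_left (1 - δ) 0, sq_nonneg ‖D γ‖]

theorem abs_sq_sub_le_of_mem_colSpan (hRIP : DRIP A D K δ) {B : Finset (Fin d)}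
    (hB : B.card ≤ K) {u : Vec n} (hu : u ∈ colSpan D B) :
    |‖A u‖ ^ 2 - ‖u‖ ^ 2| ≤ δ * ‖u‖ ^ 2 := by
  obtain ⟨γ, hγ, rfl⟩ := exists_eq_apply_of_mem_colSpan hu
  exact hRIP.abs_sq_sub_le (sparse_of_eq_zero_of_not_mem hγ hB)

end DRIP

theorem stmt4_general {m n d k : ℕ} (A : Vec n →L[ℂ] Vec m) (D : Vec d →L[ℂ] Vec n)
    (δ ε₁ : ℝ) (hε₁ : 0 ≤ ε₁) (hRIP : DRIP A D (4 * k) δ)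
    (x xl : Vec n) (α β : Vec d)
    (hα : sparse k α) (hx : x = D α) (hβ : sparse k β) (hxl : xl = D β)
    (e : Vec m) (v vt : Vec n) (hv : v = x - xl)
    (hvt : vt = (ContinuousLinearMap.adjoint A) (A v) + (ContinuousLinearMap.adjoint A) e)
    (Ωopt Ω : Finset (Fin d)) (hΩoptCard : Ωopt.card = 2 * k)
    (hopt : ∀ Λ : Finset (Fin d), Λ.card = 2 * k → ‖vt - P D Ωopt vt‖ ≤ ‖vt - P D Λ vt‖)
    (hnear : ‖P D Ωopt vt - P D Ω vt‖ ≤ ε₁ * ‖P D Ωopt vt‖) :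
    ‖v - P D Ω v‖ ≤ ((2 + ε₁) * δ + ε₁) * ‖v‖ + (2 + ε₁) * Real.sqrt (1 + δ) * ‖e‖ := by
  obtain ⟨Λ, hΛcard, hΛ⟩ := exists_card_eq_of_sparse (two_mul k ▸ sparse_sub hα hβ)
    (hΩoptCard ▸ Ωopt.card_le_univ.trans_eq (Fintype.card_fin d))
  have hvΛ : v ∈ colSpan D Λ := by
    rw [hv, hx, hxl, ← map_sub]
    exact apply_mem_colSpan hΛ
  have hΛR : colSpan D Λ ≤ colSpan D (Λ ∪ Ωopt) := colSpan_mono Finset.subset_union_left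
  have hOR : colSpan D Ωopt ≤ colSpan D (Λ ∪ Ωopt) := colSpan_mono Finset.subset_union_right
  have hR : (Λ ∪ Ωopt).card ≤ 4 * k := (Finset.card_union_le _ _).trans (by omega)
  have hA := fun u => hRIP.abs_sq_sub_le_of_mem_colSpan hR (u := u)
  have hres : ‖(colSpan D (Λ ∪ Ωopt)).starProjection (vt - v)‖ ≤ δ * ‖v‖ + √(1 + δ) * ‖e‖ := by
    rw [hvt]
    exact norm_starProjection_adjoint_add_sub_le A hA (hΛR hvΛ) e
  calc ‖v - P D Ω v‖ ≤ (2 + ε₁) * ‖(colSpan D (Λ ∪ Ωopt)).starProjection (vt - v)‖ + ε₁ * ‖v‖ :=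
        norm_sub_starProjection_le_of_near_optimal hΛR hOR hvΛ (hopt Λ hΛcard) hε₁ hnear
    _ ≤ (2 + ε₁) * (δ * ‖v‖ + √(1 + δ) * ‖e‖) + ε₁ * ‖v‖ := by gcongr
    _ = ((2 + ε₁) * δ + ε₁) * ‖v‖ + (2 + ε₁) * Real.sqrt (1 + δ) * ‖e‖ := by ring

theorem stmt4 {m n d k : ℕ} (A : Vec n →L[ℂ] Vec m) (D : Vec d →L[ℂ] Vec n)
    (δ ε₁ : ℝ) (hε₁ : 0 ≤ ε₁) (hRIP : DRIP A D (4 * k) δ)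
    (x xl : Vec n) (α β : Vec d)
    (hα : sparse k α) (hx : x = D α) (hβ : sparse k β) (hxl : xl = D β)
    (e : Vec m) (v vt : Vec n) (hv : v = x - xl)
    (hvt : vt = (ContinuousLinearMap.adjoint A) (A v) + (ContinuousLinearMap.adjoint A) e)
    (Ωopt Ω : Finset (Fin d)) (hΩoptCard : Ωopt.card = 2 * k)
    (hopt : ∀ Λ : Finset (Fin d), Λ.card = 2 * k → ‖vt - P D Ωopt vt‖ ≤ ‖vt - P D Λ vt‖)
    (hΩcard : Ω.card = 2 * k)
    (hnear : ‖P D Ωopt vt - P D Ω vt‖ ≤ ε₁ * ‖P D Ωopt vt‖) :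
    ‖v - P D Ω v‖ ≤ ((2 + ε₁) * δ + ε₁) * ‖v‖ + (2 + ε₁) * Real.sqrt (1 + δ) * ‖e‖ :=
  stmt4_general A D δ ε₁ hε₁ hRIP x xl α β hα hx hβ hxl e v vt hv hvt Ωopt Ω hΩoptCard hopt hnear
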